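/- With λ₁,…,λₙ ∈ ℝ, the vector fields K₊ = −∂₊, K₋ = −∂₋, K_{(i)} = cos(λ_i x⁻)∂_i + λ_i sin(λ_i x⁻) x^i ∂₊, K_{(i*)} = −λ_i sin(λ_i x⁻)∂_i + λ_i² cos(λ_i x⁻) x^i ∂₊, and K_{(ij)} = x^j∂_i − x^i∂_j on ℝ^{n+2} satisfy the commutation relations: [K₋, K_{(i)}] = −K_{(i*)}; [K₋, K_{(i*)}] = λ_i² K_{(i)}; [K_{(i*)}, K_{(j)}] = δ_{ij} λ_i² K₊; [K_{(i)}, K_{(j)}] = 0; [K_{(i*)}, K_{(j*)}] = 0; [K₊, K] = 0 for every K in the list; and, whenever λ_i = λ_j = λ_k, [K_{(ij)}, K_{(k)}] = −δ_{kj}K_{(i)} + δ_{ki}K_{(j)} and [K_{(ij)}, K_{(k*)}] = −δ_{kj}K_{(i*)} + δ_{ki}K_{(j*)}. Here [X,Y] denotes the commutator of vector fields, [X,Y]^μ = ∑_ν X^ν∂_ν Y^μ − Y^ν∂_ν X^μ. -/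

import Mathlib

/-- Index type for the coordinates `(x⁺, x⁻, x¹, …, xⁿ)` on `ℝ^{n+2}`:
`Sum.inl 0` is the index `+`, `Sum.inl 1` is the index `−`, and `Sum.inr i` is `i`. -/
abbrev CWIdx (n : ℕ) : Type := Fin 2 ⊕ Fin n

/-- Points of `ℝ^{n+2}`. -/
abbrev CWPt (n : ℕ) : Type := CWIdx n → ℝ

/-- The commutator of two vector fields on `ℝ^{n+2}`:
`[X,Y]^μ = ∑_ν X^ν ∂_ν Y^μ − Y^ν ∂_ν X^μ`. -/
noncomputable def vBracket {n : ℕ} (X Y : CWPt n → CWPt n) (x : CWPt n) : CWPt n :=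
  fun μ => ∑ ν, (X x ν * fderiv ℝ (fun y => Y y μ) x (Pi.single ν 1)
    - Y x ν * fderiv ℝ (fun y => X y μ) x (Pi.single ν 1))

/-- `K₊ = −∂₊`. -/
noncomputable def Kplus {n : ℕ} : CWPt n → CWPt n := fun _ => -Pi.single (Sum.inl 0) 1

/-- `K₋ = −∂₋`. -/
noncomputable def Kminus {n : ℕ} : CWPt n → CWPt n := fun _ => -Pi.single (Sum.inl 1) 1

/-- `K_{(i)} = cos(λ_i x⁻)∂_i + λ_i sin(λ_i x⁻) x^i ∂₊`. -/
noncomputable def Ki {n : ℕ} (lam : Fin n → ℝ) (i : Fin n) : CWPt n → CWPt n := fun x =>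
  Pi.single (Sum.inr i) (Real.cos (lam i * x (Sum.inl 1)))
    + Pi.single (Sum.inl 0) (lam i * Real.sin (lam i * x (Sum.inl 1)) * x (Sum.inr i))

/-- `K_{(i*)} = −λ_i sin(λ_i x⁻)∂_i + λ_i² cos(λ_i x⁻) x^i ∂₊`. -/
noncomputable def Kistar {n : ℕ} (lam : Fin n → ℝ) (i : Fin n) : CWPt n → CWPt n := fun x =>
  Pi.single (Sum.inr i) (-(lam i * Real.sin (lam i * x (Sum.inl 1))))
    + Pi.single (Sum.inl 0) (lam i ^ 2 * Real.cos (lam i * x (Sum.inl 1)) * x (Sum.inr i))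

/-- `K_{(ij)} = x^j ∂_i − x^i ∂_j`. -/
noncomputable def Kij {n : ℕ} (i j : Fin n) : CWPt n → CWPt n := fun x =>
  Pi.single (Sum.inr i) (x (Sum.inr j)) - Pi.single (Sum.inr j) (x (Sum.inr i))

/-!
Writing `D` for the derivative of a vector field, `[X, Y] = D Y (X) - D X (Y)`. Apart from the
linear field `K_{(ij)}`, every field depends only on `x⁻` and on one `x^i`, the latter only through
its `∂₊`-component; and `∂₋ K_{(i)} = K_{(i*)}`, `∂₋ K_{(i*)} = -λ_i² K_{(i)}`. Each relation is
then a short computation, the one for `[K_{(i*)}, K_{(i)}]` using `sin² + cos² = 1`.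
-/

open ContinuousLinearMap

theorem fderiv_coord {ι : Type*} [Fintype ι] (a : ι) (x : ι → ℝ) :
    fderiv ℝ (fun y : ι → ℝ => y a) x = proj a :=
  (hasFDerivAt_apply a x).fderiv

section Bracket

variable {n : ℕ} {X Y : CWPt n → CWPt n} {x : CWPt n}

theorem vBracket_eq_fderiv_sub (hX : DifferentiableAt ℝ X x) (hY : DifferentiableAt ℝ Y x) :
    vBracket X Y x = fderiv ℝ Y x (X x) - fderiv ℝ X x (Y x) := by
  ext μ
  conv_rhs => rw [pi_eq_sum_univ' (X x), pi_eq_sum_univ' (Y x)]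
  simp [vBracket, fderiv_apply hX, fderiv_apply hY, Finset.sum_sub_distrib]

theorem vBracket_const_left (c : CWPt n) (hY : DifferentiableAt ℝ Y x) :
    vBracket (fun _ => c) Y x = fderiv ℝ Y x c := by
  rw [vBracket_eq_fderiv_sub (differentiableAt_const c) hY, fderiv_const_apply, zero_apply,
    sub_zero]

theorem vBracket_const_const (c d : CWPt n) : vBracket (fun _ => c) (fun _ : CWPt n => d) = 0 := by
  ext1 x
  rw [vBracket_const_left c (differentiableAt_const d), fderiv_const_apply, zero_apply]
  rfl

end Bracket

section Fields

variable {n : ℕ} (lam : Fin n → ℝ)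

local notation "e" => (Pi.single · (1 : ℝ) : CWIdx n → CWPt n)

theorem Ki_eq_smul (i : Fin n) : Ki lam i = fun x =>
    Real.cos (lam i * x (.inl 1)) • e (.inr i)
      + (lam i * Real.sin (lam i * x (.inl 1)) * x (.inr i)) • e (.inl 0) := by
  funext x; simp only [Ki, ← Pi.single_smul', smul_eq_mul, mul_one]

theorem Kistar_eq_smul (i : Fin n) : Kistar lam i = fun x =>
    -(lam i * Real.sin (lam i * x (.inl 1))) • e (.inr i)
      + (lam i ^ 2 * Real.cos (lam i * x (.inl 1)) * x (.inr i)) • e (.inl 0) := by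
  funext x; simp only [Kistar, ← Pi.single_smul', smul_eq_mul, mul_one]

theorem Kij_eq_smul (i j : Fin n) :
    Kij i j = fun x => x (.inr j) • e (.inr i) - x (.inr i) • e (.inr j) := by
  funext x; simp only [Kij, ← Pi.single_smul', smul_eq_mul, mul_one]

theorem differentiable_Ki (i : Fin n) : Differentiable ℝ (Ki lam i) := by
  rw [Ki_eq_smul]; fun_prop

theorem differentiable_Kistar (i : Fin n) : Differentiable ℝ (Kistar lam i) := by
  rw [Kistar_eq_smul]; fun_prop

theorem differentiable_Kij (i j : Fin n) : Differentiable ℝ (Kij (n := n) i j) := by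
  rw [Kij_eq_smul]; fun_prop

theorem fderiv_Ki_apply (i : Fin n) (x v : CWPt n) :
    fderiv ℝ (Ki lam i) x v = v (.inl 1) • Kistar lam i x
      + (lam i * Real.sin (lam i * x (.inl 1)) * v (.inr i)) • e (.inl 0) := by
  rw [Ki_eq_smul, Kistar_eq_smul]
  simp (disch := fun_prop) only [fderiv_fun_add, fderiv_smul_const, fderiv_fun_mul, fderiv_coord,
    add_apply, smulRight_apply]
  simp (disch := fun_prop) [fderiv_const_mul, fderiv_coord]
  module

theorem fderiv_Kistar_apply (i : Fin n) (x v : CWPt n) :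
    fderiv ℝ (Kistar lam i) x v = -(lam i ^ 2 * v (.inl 1)) • Ki lam i x
      + (lam i ^ 2 * Real.cos (lam i * x (.inl 1)) * v (.inr i)) • e (.inl 0) := by
  rw [Ki_eq_smul, Kistar_eq_smul]
  simp (disch := fun_prop) only [fderiv_fun_add, fderiv_fun_neg, fderiv_smul_const, fderiv_fun_mul,
    fderiv_coord, add_apply, smulRight_apply]
  simp (disch := fun_prop) [fderiv_const_mul, fderiv_coord]
  module

theorem fderiv_Kij_apply (i j : Fin n) (x v : CWPt n) : fderiv ℝ (Kij i j) x v = Kij i j v := by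
  rw [Kij_eq_smul]
  simp (disch := fun_prop) [fderiv_fun_sub, fderiv_smul_const, fderiv_coord]

theorem vBracket_Kminus_Ki (i : Fin n) : vBracket Kminus (Ki lam i) = -Kistar lam i := by
  ext1 x
  unfold Kminus
  rw [vBracket_const_left _ (differentiable_Ki lam i x), fderiv_Ki_apply]
  simp

theorem vBracket_Kminus_Kistar (i : Fin n) :
    vBracket Kminus (Kistar lam i) = lam i ^ 2 • Ki lam i := by
  ext1 x
  unfold Kminus
  rw [vBracket_const_left _ (differentiable_Kistar lam i x), fderiv_Kistar_apply]
  simp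

theorem vBracket_Kplus_Ki (i : Fin n) : vBracket Kplus (Ki lam i) = 0 := by
  ext1 x
  unfold Kplus
  rw [vBracket_const_left _ (differentiable_Ki lam i x), fderiv_Ki_apply]
  simp

theorem vBracket_Kplus_Kistar (i : Fin n) : vBracket Kplus (Kistar lam i) = 0 := by
  ext1 x
  unfold Kplus
  rw [vBracket_const_left _ (differentiable_Kistar lam i x), fderiv_Kistar_apply]
  simp

theorem vBracket_Kplus_Kij (i j : Fin n) : vBracket Kplus (Kij i j) = 0 := by
  ext1 x
  unfold Kplus
  rw [vBracket_const_left _ (differentiable_Kij i j x), fderiv_Kij_apply]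
  simp [Kij]

theorem vBracket_Kistar_Ki (i j : Fin n) :
    vBracket (Kistar lam i) (Ki lam j) = (if i = j then lam i ^ 2 else 0) • Kplus := by
  ext1 x
  rw [vBracket_eq_fderiv_sub (differentiable_Kistar lam i x) (differentiable_Ki lam j x),
    fderiv_Ki_apply, fderiv_Kistar_apply]
  rcases eq_or_ne i j with rfl | hij
  · simp [Ki, Kistar, Kplus]
    linear_combination (norm := module)
      (-(lam i ^ 2) • Real.sin_sq_add_cos_sq (lam i * x (.inl 1))) • e (.inl 0)
  · simp [Ki, Kistar, hij, hij.symm]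

theorem vBracket_Ki_Ki (i j : Fin n) : vBracket (Ki lam i) (Ki lam j) = 0 := by
  ext1 x
  rw [vBracket_eq_fderiv_sub (differentiable_Ki lam i x) (differentiable_Ki lam j x),
    fderiv_Ki_apply, fderiv_Ki_apply]
  rcases eq_or_ne i j with rfl | hij
  · simp [Ki]
  · simp [Ki, hij, hij.symm]

theorem vBracket_Kistar_Kistar (i j : Fin n) : vBracket (Kistar lam i) (Kistar lam j) = 0 := by
  ext1 x
  rw [vBracket_eq_fderiv_sub (differentiable_Kistar lam i x) (differentiable_Kistar lam j x),
    fderiv_Kistar_apply, fderiv_Kistar_apply]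
  rcases eq_or_ne i j with rfl | hij
  · simp [Kistar]
  · simp [Kistar, hij, hij.symm]

theorem vBracket_Kij_Ki (i j k : Fin n) (hij : lam i = lam j) (hjk : lam j = lam k) :
    vBracket (Kij i j) (Ki lam k)
      = -((if k = j then (1:ℝ) else 0) • Ki lam i)
        + (if k = i then (1:ℝ) else 0) • Ki lam j := by
  ext1 x
  rw [vBracket_eq_fderiv_sub (differentiable_Kij i j x) (differentiable_Ki lam k x),
    fderiv_Ki_apply, fderiv_Kij_apply]
  -- a fresh name for the common value keeps `simp` from looping after the substitutions below
  obtain ⟨c, hi, hj, hk⟩ : ∃ c, lam i = c ∧ lam j = c ∧ lam k = c :=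
    ⟨lam k, hij.trans hjk, hjk, rfl⟩
  rcases eq_or_ne k j with rfl | hkj <;> rcases eq_or_ne k i with rfl | hki
  · simp [Kij_eq_smul]
  · simp [Kij_eq_smul, Ki_eq_smul, hi, hk, hki, hki.symm]
    module
  · simp [Kij_eq_smul, Ki_eq_smul, hj, hk, hkj, hkj.symm]
    module
  · simp [Kij_eq_smul, Ki_eq_smul, hkj, hki, hkj.symm, hki.symm]

theorem vBracket_Kij_Kistar (i j k : Fin n) (hij : lam i = lam j) (hjk : lam j = lam k) :
    vBracket (Kij i j) (Kistar lam k)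
      = -((if k = j then (1:ℝ) else 0) • Kistar lam i)
        + (if k = i then (1:ℝ) else 0) • Kistar lam j := by
  ext1 x
  rw [vBracket_eq_fderiv_sub (differentiable_Kij i j x) (differentiable_Kistar lam k x),
    fderiv_Kistar_apply, fderiv_Kij_apply]
  obtain ⟨c, hi, hj, hk⟩ : ∃ c, lam i = c ∧ lam j = c ∧ lam k = c :=
    ⟨lam k, hij.trans hjk, hjk, rfl⟩
  rcases eq_or_ne k j with rfl | hkj <;> rcases eq_or_ne k i with rfl | hki
  · simp [Kij_eq_smul]
  · simp [Kij_eq_smul, Kistar_eq_smul, hi, hk, hki, hki.symm]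
  · simp [Kij_eq_smul, Kistar_eq_smul, hj, hk, hkj, hkj.symm]
    module
  · simp [Kij_eq_smul, Kistar_eq_smul, hkj, hki, hkj.symm, hki.symm]

end Fields

/-- The commutation relations of the Killing vector fields
`K₊, K₋, K_{(i)}, K_{(i*)}, K_{(ij)}` on `ℝ^{n+2}`. -/
theorem killing_commutation_relations {n : ℕ} (lam : Fin n → ℝ) :
    (∀ i, vBracket Kminus (Ki lam i) = -(Kistar lam i)) ∧
    (∀ i, vBracket Kminus (Kistar lam i) = (lam i ^ 2) • Ki lam i) ∧
    (∀ i j, vBracket (Kistar lam i) (Ki lam j)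
      = (if i = j then lam i ^ 2 else 0) • Kplus (n := n)) ∧
    (∀ i j, vBracket (Ki lam i) (Ki lam j) = 0) ∧
    (∀ i j, vBracket (Kistar lam i) (Kistar lam j) = 0) ∧
    (vBracket (Kplus (n := n)) Kplus = 0) ∧
    (vBracket (Kplus (n := n)) Kminus = 0) ∧
    (∀ i, vBracket Kplus (Ki lam i) = 0) ∧
    (∀ i, vBracket Kplus (Kistar lam i) = 0) ∧
    (∀ i j, vBracket (Kplus (n := n)) (Kij i j) = 0) ∧
    (∀ i j k, lam i = lam j → lam j = lam k →
      vBracket (Kij i j) (Ki lam k)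
        = -((if k = j then (1:ℝ) else 0) • Ki lam i)
          + (if k = i then (1:ℝ) else 0) • Ki lam j) ∧
    (∀ i j k, lam i = lam j → lam j = lam k →
      vBracket (Kij i j) (Kistar lam k)
        = -((if k = j then (1:ℝ) else 0) • Kistar lam i)
          + (if k = i then (1:ℝ) else 0) • Kistar lam j) := by
  exact ⟨vBracket_Kminus_Ki lam, vBracket_Kminus_Kistar lam, vBracket_Kistar_Ki lam,
    vBracket_Ki_Ki lam, vBracket_Kistar_Kistar lam, vBracket_const_const _ _,
    vBracket_const_const _ _, vBracket_Kplus_Ki lam, vBracket_Kplus_Kistar lam, vBracket_Kplus_Kij,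
    vBracket_Kij_Ki lam, vBracket_Kij_Kistar lam⟩
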